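/- Let C be a symmetric monoidal category admitting all small colimits whose tensor product preserves small colimits in each variable, and suppose every object of C is a filtered colimit of objects that are both compact and dualizable. Let D be a symmetric monoidal category admitting all small colimits, and let F : C ⥤ D be a strong symmetric monoidal functor that preserves small colimits and sends compact objects to compact objects. Then a dualizable object X of C is F-colocal if and only if its dual X^∨ is F-local. -/
import Mathlib


/-!
Let `C` be a symmetric monoidal category with all small colimits whose tensor product preserves
small colimits in each variable, in which every object is a filtered colimit of objects which
are both compact and dualizable.  Let `D` be a symmetric monoidal category with all small
colimits and `F : C ⥤ D` a strong symmetric monoidal functor preserving small colimits and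
compact objects.  Then a dualizable object `X : C` is `F`-colocal iff its dual `Xᘁ` is
`F`-local.  (Compact: `Hom(Q, -)` preserves filtered colimits; dualizable: `HasRightDual`.)
-/

open CategoryTheory CategoryTheory.Limits MonoidalCategory Opposite

universe v u₁ u₂

/-- `Q` is compact if `Hom(Q, -)` preserves (small) filtered colimits. -/
def Compact {C : Type u₁} [Category.{v} C] (Q : C) : Prop :=
  Nonempty (PreservesFilteredColimitsOfSize.{v, v} (coyoneda.obj (op Q)))

/-- `X` is `F`-colocal if `F` induces a bijection `Hom(X, Y) → Hom(F X, F Y)` for all `Y`. -/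
def Colocal {C : Type u₁} {D : Type u₂} [Category.{v} C] [Category.{v} D]
    (F : C ⥤ D) (X : C) : Prop :=
  ∀ Y : C, Function.Bijective (fun f : X ⟶ Y => F.map f)

/-- `X` is `F`-local if `F` induces a bijection `Hom(Z, X) → Hom(F Z, F X)` for all `Z`. -/
def Local {C : Type u₁} {D : Type u₂} [Category.{v} C] [Category.{v} D]
    (F : C ⥤ D) (X : C) : Prop :=
  ∀ Z : C, Function.Bijective (fun f : Z ⟶ X => F.map f)

section Aux

set_option linter.unusedSectionVars false
section Aux

set_option linter.unusedSectionVars false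

open CategoryTheory.Functor.LaxMonoidal CategoryTheory.Functor.OplaxMonoidal

variable {C : Type u₁} {D : Type u₂} [Category.{v} C] [Category.{v} D]
  [MonoidalCategory C] [MonoidalCategory D] (F : C ⥤ D) [F.Monoidal]

/-- A strong monoidal functor sends exact pairings to exact pairings. -/
def FPair (A B : C) [ExactPairing A B] : ExactPairing (F.obj A) (F.obj B) where
  coevaluation' := ε F ≫ F.map (η_ A B) ≫ δ F A B
  evaluation' := μ F B A ≫ F.map (ε_ A B) ≫ η F
  coevaluation_evaluation' := by
    have h := congrArg F.map (ExactPairing.coevaluation_evaluation (X := A) (Y := B))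
    simp only [Functor.map_comp, Functor.Monoidal.map_whiskerLeft,
      Functor.Monoidal.map_whiskerRight, Functor.Monoidal.map_associator_inv,
      Functor.Monoidal.map_rightUnitor, Functor.Monoidal.map_leftUnitor_inv, Category.assoc,
      Functor.Monoidal.μ_δ_assoc] at h
    rw [cancel_epi] at h
    simp only [← Category.assoc] at h
    rw [cancel_mono] at h
    simp only [Category.assoc] at h
    simp only [MonoidalCategory.whiskerLeft_comp, comp_whiskerRight, Category.assoc]
    rw [reassoc_of% h]
    simp only [← MonoidalCategory.whiskerLeft_comp_assoc, Functor.Monoidal.ε_η,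
      MonoidalCategory.whiskerLeft_id, Category.id_comp]
    simp [← comp_whiskerRight]
  evaluation_coevaluation' := by
    have h := congrArg F.map (ExactPairing.evaluation_coevaluation (X := A) (Y := B))
    simp only [Functor.map_comp, Functor.Monoidal.map_whiskerLeft,
      Functor.Monoidal.map_whiskerRight, Functor.Monoidal.map_associator,
      Functor.Monoidal.map_leftUnitor, Functor.Monoidal.map_rightUnitor_inv, Category.assoc,
      Functor.Monoidal.μ_δ_assoc] at h
    rw [cancel_epi] at h
    simp only [← Category.assoc] at h
    rw [cancel_mono] at h
    simp only [Category.assoc] at h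
    simp only [MonoidalCategory.whiskerLeft_comp, comp_whiskerRight, Category.assoc]
    rw [reassoc_of% h]
    simp only [← comp_whiskerRight_assoc, Functor.Monoidal.ε_η,
      id_whiskerRight, Category.id_comp]
    simp [← MonoidalCategory.whiskerLeft_comp]

lemma FPair_coev (A B : C) [ExactPairing A B] :
    (@ExactPairing.coevaluation _ _ _ (F.obj A) (F.obj B) (FPair F A B)) =
      ε F ≫ F.map (η_ A B) ≫ δ F A B := rfl

lemma tLHE_compat (Q Y Y' Z : C) [ExactPairing Y Y'] (f : Y' ⊗ Q ⟶ Z) :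
    F.map ((tensorLeftHomEquiv Q Y Y' Z) f) =
      (@tensorLeftHomEquiv D _ _ (F.obj Q) (F.obj Y) (F.obj Y') (F.obj Z) (FPair F Y Y'))
        (μ F Y' Q ≫ F.map f) ≫ μ F Y Z := by
  simp only [tensorLeftHomEquiv, Equiv.coe_fn_mk, Functor.map_comp,
    Functor.Monoidal.map_leftUnitor_inv, Functor.Monoidal.map_whiskerRight,
    Functor.Monoidal.map_associator, Functor.Monoidal.map_whiskerLeft, Category.assoc,
    Functor.Monoidal.μ_δ_assoc, FPair_coev, MonoidalCategory.whiskerLeft_comp,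
    comp_whiskerRight]

lemma tRHE_compat (Q Y Y' Z : C) [ExactPairing Y Y'] (f : Q ⊗ Y ⟶ Z) :
    F.map ((tensorRightHomEquiv Q Y Y' Z) f) =
      (@tensorRightHomEquiv D _ _ (F.obj Q) (F.obj Y) (F.obj Y') (F.obj Z) (FPair F Y Y'))
        (μ F Q Y ≫ F.map f) ≫ μ F Z Y' := by
  simp only [tensorRightHomEquiv, Equiv.coe_fn_mk, Functor.map_comp,
    Functor.Monoidal.map_rightUnitor_inv, Functor.Monoidal.map_whiskerLeft,
    Functor.Monoidal.map_associator_inv, Functor.Monoidal.map_whiskerRight, Category.assoc,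
    Functor.Monoidal.μ_δ_assoc, FPair_coev, MonoidalCategory.whiskerLeft_comp,
    comp_whiskerRight]

/-- The bijectivity predicate we move around. -/
def MapBij (A B : C) : Prop := Function.Bijective (fun f : A ⟶ B => F.map f)

lemma mapBij_equiv {A B A' B' : C} (eC : (A ⟶ B) ≃ (A' ⟶ B'))
    (eD : (F.obj A ⟶ F.obj B) ≃ (F.obj A' ⟶ F.obj B'))
    (hcomm : ∀ f : A ⟶ B, F.map (eC f) = eD (F.map f)) :
    MapBij F A B ↔ MapBij F A' B' := by
  have key : (fun f' : A' ⟶ B' => F.map f') =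
      eD ∘ (fun f : A ⟶ B => F.map f) ∘ eC.symm := by
    funext f'
    have := hcomm (eC.symm f')
    simpa using this
  constructor
  · intro h
    unfold MapBij
    rw [key]
    exact eD.bijective.comp (h.comp eC.symm.bijective)
  · intro h
    unfold MapBij at h ⊢
    rw [key] at h
    have h2 := (eD.symm.bijective.comp h).comp eC.bijective
    convert h2 using 1
    funext f
    simp

lemma mapBij_congr {A B A' B' : C} (eA : A ≅ A') (eB : B ≅ B') :
    MapBij F A B ↔ MapBij F A' B' := by
  refine mapBij_equiv F (Iso.homCongr eA eB) (Iso.homCongr (F.mapIso eA) (F.mapIso eB)) ?_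
  intro f
  simp

lemma mapBij_tensorLeft (Q Y Y' Z : C) [ExactPairing Y Y'] :
    MapBij F (Y' ⊗ Q) Z ↔ MapBij F Q (Y ⊗ Z) := by
  refine mapBij_equiv F (tensorLeftHomEquiv Q Y Y' Z)
    ((Iso.homCongr (Functor.Monoidal.μIso F Y' Q).symm (Iso.refl _)).trans
      ((@tensorLeftHomEquiv D _ _ (F.obj Q) (F.obj Y) (F.obj Y') (F.obj Z)
        (FPair F Y Y')).trans
        (Iso.homCongr (Iso.refl _) (Functor.Monoidal.μIso F Y Z)))) ?_
  intro f
  simp [tLHE_compat]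

lemma mapBij_tensorRight (Q Y Y' Z : C) [ExactPairing Y Y'] :
    MapBij F (Q ⊗ Y) Z ↔ MapBij F Q (Z ⊗ Y') := by
  refine mapBij_equiv F (tensorRightHomEquiv Q Y Y' Z)
    ((Iso.homCongr (Functor.Monoidal.μIso F Q Y).symm (Iso.refl _)).trans
      ((@tensorRightHomEquiv D _ _ (F.obj Q) (F.obj Y) (F.obj Y') (F.obj Z)
        (FPair F Y Y')).trans
        (Iso.homCongr (Iso.refl _) (Functor.Monoidal.μIso F Z Y')))) ?_
  intro f
  simp [tRHE_compat]

lemma mapBij_dual [BraidedCategory C] (X W : C) [HasRightDual X] [HasRightDual W] :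
    MapBij F X (Wᘁ) ↔ MapBij F W (Xᘁ) :=
  calc MapBij F X (Wᘁ) ↔ MapBij F X (𝟙_ C ⊗ Wᘁ) :=
        mapBij_congr F (Iso.refl X) (λ_ (Wᘁ)).symm
    _ ↔ MapBij F (X ⊗ W) (𝟙_ C) := (mapBij_tensorRight F X W (Wᘁ) (𝟙_ C)).symm
    _ ↔ MapBij F (W ⊗ X) (𝟙_ C) := mapBij_congr F (β_ X W) (Iso.refl _)
    _ ↔ MapBij F W (𝟙_ C ⊗ Xᘁ) := mapBij_tensorRight F W X (Xᘁ) (𝟙_ C)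
    _ ↔ MapBij F W (Xᘁ) := mapBij_congr F (Iso.refl W) (λ_ (Xᘁ))

/-- Bijectivity of `F` on homs out of a colimit, given it on each vertex. -/
lemma mapBij_of_colimit {J : Type v} [Category.{v} J] {W : J ⥤ C} {t : Cocone W}
    (ht : IsColimit t) (hFt : IsColimit (F.mapCocone t)) (B : C)
    (hj : ∀ j : J, MapBij F (W.obj j) B) : MapBij F t.pt B := by
  constructor
  · intro f f' h
    refine ht.hom_ext fun j => ?_
    have hh : F.map f = F.map f' := h
    have : F.map (t.ι.app j ≫ f) = F.map (t.ι.app j ≫ f') := by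
      rw [F.map_comp, F.map_comp, hh]
    exact (hj j).1 this
  · intro φ
    have hch : ∀ j : J, ∃ g : W.obj j ⟶ B, F.map g = F.map (t.ι.app j) ≫ φ :=
      fun j => (hj j).2 _
    choose g hg using hch
    have hnat : ∀ {j j' : J} (u : j ⟶ j'), W.map u ≫ g j' = g j := by
      intro j j' u
      apply (hj j).1
      show F.map (W.map u ≫ g j') = F.map (g j)
      rw [F.map_comp, hg j', hg j, ← Category.assoc, ← F.map_comp, t.w]
    refine ⟨ht.desc ⟨B, ⟨g, by intro j j' u; simp [hnat u]⟩⟩, ?_⟩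
    refine hFt.hom_ext fun j => ?_
    show (F.mapCocone t).ι.app j ≫ F.map _ = (F.mapCocone t).ι.app j ≫ φ
    rw [Functor.mapCocone_ι_app, ← F.map_comp, ht.fac]
    exact hg j
/-- Bijectivity of `F` on homs from a compact object into a filtered colimit. -/
lemma mapBij_of_compact {J : Type v} [Category.{v} J] [IsFiltered J] {M : J ⥤ C}
    {t : Cocone M} (ht : IsColimit t) (hFt : IsColimit (F.mapCocone t)) (U : C)
    (hU : Compact U) (hFU : Compact (F.obj U))
    (hj : ∀ j : J, MapBij F U (M.obj j)) : MapBij F U t.pt := by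
  letI := hU.some
  letI := hFU.some
  have hc : IsColimit ((coyoneda.obj (op U)).mapCocone t) :=
    isColimitOfPreserves (coyoneda.obj (op U)) ht
  have hd : IsColimit ((coyoneda.obj (op (F.obj U))).mapCocone (F.mapCocone t)) :=
    isColimitOfPreserves (coyoneda.obj (op (F.obj U))) hFt
  constructor
  · intro f f' h
    obtain ⟨j, gj, hgj⟩ := Types.jointly_surjective _ hc f
    obtain ⟨j', gj', hgj'⟩ := Types.jointly_surjective _ hc f'
    have hgjc : gj ≫ t.ι.app j = f := hgj
    have hgjc' : gj' ≫ t.ι.app j' = f' := hgj'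
    have hh : F.map f = F.map f' := h
    have heq : ((coyoneda.obj (op (F.obj U))).mapCocone (F.mapCocone t)).ι.app j (F.map gj) =
        ((coyoneda.obj (op (F.obj U))).mapCocone (F.mapCocone t)).ι.app j' (F.map gj') := by
      show F.map gj ≫ F.map (t.ι.app j) = F.map gj' ≫ F.map (t.ι.app j')
      rw [← F.map_comp, ← F.map_comp, hgjc, hgjc', hh]
    rw [Types.FilteredColimit.isColimit_eq_iff _ hd] at heq
    obtain ⟨k, u, u', he⟩ := heq
    have he2 : F.map gj ≫ F.map (M.map u) = F.map gj' ≫ F.map (M.map u') := he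
    have he' : F.map (gj ≫ M.map u) = F.map (gj' ≫ M.map u') := by
      rw [F.map_comp, F.map_comp, he2]
    have hk : gj ≫ M.map u = gj' ≫ M.map u' := (hj k).1 he'
    rw [← hgjc, ← hgjc', ← t.w u, ← t.w u', ← Category.assoc, ← Category.assoc, hk]
  · intro φ
    obtain ⟨j, ψ, hψ⟩ := Types.jointly_surjective _ hd φ
    obtain ⟨g, hg⟩ := (hj j).2 ψ
    have hgc : F.map g = ψ := hg
    refine ⟨g ≫ t.ι.app j, ?_⟩
    show F.map (g ≫ t.ι.app j) = φ
    rw [F.map_comp, hgc]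
    exact hψ

end Aux
theorem stmt11 {C : Type u₁} {D : Type u₂} [Category.{v} C] [Category.{v} D]
    [MonoidalCategory C] [SymmetricCategory C] [MonoidalCategory D] [SymmetricCategory D]
    [HasColimitsOfSize.{v, v} C] [HasColimitsOfSize.{v, v} D]
    [∀ X : C, PreservesColimitsOfSize.{v, v} (tensorLeft X)]
    [∀ X : C, PreservesColimitsOfSize.{v, v} (tensorRight X)]
    (hgen : ∀ c : C, ∃ (J : Cat.{v, v}) (_ : IsFiltered J) (W : J ⥤ C) (t : Cocone W),
      (∀ j : J, Compact (W.obj j) ∧ Nonempty (HasRightDual (W.obj j))) ∧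
      Nonempty (IsColimit t) ∧ Nonempty (t.pt ≅ c))
    (F : C ⥤ D) [F.Braided] [PreservesColimitsOfSize.{v, v} F]
    (hcpt : ∀ c : C, Compact c → Compact (F.obj c))
    (X : C) [HasRightDual X] :
    Colocal F X ↔ Local F (Xᘁ) := by
  constructor
  · intro hC Z
    obtain ⟨J, hJ, W, t, hprop, ⟨ht⟩, ⟨e⟩⟩ := hgen Z
    have h1 : ∀ j, MapBij F (W.obj j) (Xᘁ) := by
      intro j
      letI := (hprop j).2.some
      exact (mapBij_dual F X (W.obj j)).mp (hC ((W.obj j)ᘁ))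
    have h2 : MapBij F t.pt (Xᘁ) :=
      mapBij_of_colimit F ht (isColimitOfPreserves F ht) _ h1
    exact (mapBij_congr F e (Iso.refl _)).mp h2
  · intro hL Y
    obtain ⟨K, hK, U, r, hpropU, ⟨hr⟩, ⟨i⟩⟩ := hgen (𝟙_ C)
    obtain ⟨J, hJ, W, t, hpropW, ⟨ht⟩, ⟨e⟩⟩ := hgen Y
    letI : IsFiltered J := hJ
    have ht' : IsColimit ((tensorRight (Xᘁ)).mapCocone t) :=
      isColimitOfPreserves _ ht
    have hUk : ∀ k, MapBij F (U.obj k) ((tensorRight (Xᘁ)).mapCocone t).pt := by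
      intro k
      refine mapBij_of_compact F ht' (isColimitOfPreserves F ht') _ (hpropU k).1
        (hcpt _ (hpropU k).1) ?_
      intro j
      letI := (hpropW j).2.some
      exact (mapBij_tensorLeft F (U.obj k) (W.obj j) ((W.obj j)ᘁ) (Xᘁ)).mp
        (hL ((W.obj j)ᘁ ⊗ U.obj k))
    have h1 : MapBij F r.pt ((tensorRight (Xᘁ)).mapCocone t).pt :=
      mapBij_of_colimit F hr (isColimitOfPreserves F hr) _ hUk
    have h2 : MapBij F (𝟙_ C) (Y ⊗ Xᘁ) :=
      (mapBij_congr F i ((tensorRight (Xᘁ)).mapIso e)).mp h1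
    exact ((mapBij_congr F (λ_ X).symm (Iso.refl Y)).trans
      (mapBij_tensorRight F (𝟙_ C) X (Xᘁ) Y)).mpr h2
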